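/- arXiv:2302.08850 — 4 statements merged into one kernel-verified Lean document; each statement's English description precedes it below -/
import Mathlib

section
/- For complex numbers u with |u| < 1/q, setting a = -(q-1)u and b = -u, the expression 1 - b(a+b) + a(k-1)u, divided by 1 - b(a+b), equals (1 - (qk - k + 1)u²)/(1 - qu²). In particular, the determinant of I - uT for the one-ray weighted graph with base group of order k equals (1 - (qk - k + 1)u²)/(1 - qu²), so its Bass-Ihara zeta function is (1 - qu²)/(1 - (qk - k + 1)u²). -/
theorem det_one_ray_general (q k : ℕ) (u : ℂ) (a b : ℂ)
    (ha : a = -((q : ℂ) - 1) * u) (hb : b = -u) :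
    (1 - b * (a + b) + a * ((k : ℂ) - 1) * u) / (1 - b * (a + b)) =
      (1 - ((q : ℂ) * k - k + 1) * u ^ 2) / (1 - (q : ℂ) * u ^ 2) := by
  subst ha hb
  congr 1 <;> ring

/-- For `a = -(q-1)u`, `b = -u` and `|u| < 1/q`, we have
`(1 - b(a+b) + a(k-1)u)/(1 - b(a+b)) = (1 - (qk - k + 1)u²)/(1 - qu²)`. -/
theorem det_one_ray (q k : ℕ) (hq : 2 ≤ q) (hk : 1 ≤ k) (u : ℂ)
    (hu : ‖u‖ < 1 / q) (a b : ℂ)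
    (ha : a = -((q : ℂ) - 1) * u) (hb : b = -u) :
    (1 - b * (a + b) + a * ((k : ℂ) - 1) * u) / (1 - b * (a + b)) =
      (1 - ((q : ℂ) * k - k + 1) * u ^ 2) / (1 - (q : ℂ) * u ^ 2) :=
  det_one_ray_general q k u a b ha hb
end

section
/- With a = -(q-1)u and b = -u, the 3×3 determinant of the matrix [[1 + b^{N+1}(a+b)^N, ab²∑_{k=0}^{N-1} b^k(a+b)^k, b], [a∑_{k=0}^{N-1} b^k(a+b)^k, 1 + b^{N+1}(a+b)^N, -1], [ab^N(a+b)^N, a + a²b∑_{k=0}^{N-1} b^k(a+b)^k, -b]] equals (1 + b^{N+1}(a+b)^N + ab∑_{k=0}^{N-1} b^k(a+b)^k) · (a∑_{k=0}^{N} b^k(a+b)^k - b - b^{N+1}(a+b)^{N+1}). -/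
/-- The 3×3 determinant arising in the computation of `det(A_N')` factors as stated. -/
theorem det_AN'_factorization (q N : ℕ) (hq : 2 ≤ q) (hN : 1 ≤ N) (u : ℂ)
    (a b : ℂ) (ha : a = -((q : ℂ) - 1) * u) (hb : b = -u) :
    Matrix.det
      !![1 + b ^ (N + 1) * (a + b) ^ N,
          a * b ^ 2 * ∑ k ∈ Finset.range N, b ^ k * (a + b) ^ k, b;
        a * ∑ k ∈ Finset.range N, b ^ k * (a + b) ^ k,
          1 + b ^ (N + 1) * (a + b) ^ N, -1;
        a * b ^ N * (a + b) ^ N,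
          a + a ^ 2 * b * ∑ k ∈ Finset.range N, b ^ k * (a + b) ^ k, -b] =
      (1 + b ^ (N + 1) * (a + b) ^ N +
          a * b * ∑ k ∈ Finset.range N, b ^ k * (a + b) ^ k) *
        (a * ∑ k ∈ Finset.range (N + 1), b ^ k * (a + b) ^ k - b -
          b ^ (N + 1) * (a + b) ^ (N + 1)) := by
  have h : (b * (a + b) - 1) * (∑ k ∈ Finset.range N, b ^ k * (a + b) ^ k) + 1 =
      b ^ N * (a + b) ^ N := by
    have hg := geom_sum_mul (b * (a + b)) N
    simp_rw [mul_pow] at hg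
    linear_combination hg
  rw [Matrix.det_fin_three, Finset.sum_range_succ]
  simp only [Matrix.cons_val', Matrix.cons_val_zero, Matrix.cons_val_one, Matrix.head_cons,
    Matrix.cons_val_two, Matrix.tail_cons, Matrix.empty_val', Matrix.cons_val_fin_one,
    Matrix.head_fin_const, Matrix.of_apply]
  linear_combination (a + a * b * (b ^ N * (a + b) ^ N) +
    a ^ 2 * b * (∑ k ∈ Finset.range N, b ^ k * (a + b) ^ k)) * h
end

section
/- For a = -(q-1)u, b = -u, and A_N' as above, the quantity (1 + b^{N+1}(a+b)^N)² - a²b²(∑_{k=0}^{N-1} b^k(a+b)^k)² - a·det(A_N') + (q(q-1)u³/(1-qu²))·det(A_N') equals (1-u²)(1-qu)·((1+u)∑_{k=0}^{N-1} q^k u^{2k} + q^N u^{2N})·(1 + (q-1)∑_{k=0}^{N} q^k u^{2k+1} - q^N u^{2N+1}) / (1 - qu²), where det(A_N') = (1 + b^{N+1}(a+b)^N + ab∑_{k=0}^{N-1} b^k(a+b)^k)(a∑_{k=0}^{N} b^k(a+b)^k - b - b^{N+1}(a+b)^{N+1}). This is the reciprocal of the zeta function Z_{X_N}(u). -/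
/-- Explicit factorization of `det(I - uT) = Z_{X_N}(u)⁻¹` for the graphs of
groups `X_N`. -/
theorem zeta_XN_reciprocal_factorization (q N : ℕ) (hq : 2 ≤ q) (hN : 1 ≤ N)
    (u : ℂ) (hu : 1 - (q : ℂ) * u ^ 2 ≠ 0) (a b S D : ℂ)
    (ha : a = -((q : ℂ) - 1) * u) (hb : b = -u)
    (hS : S = ∑ k ∈ Finset.range N, b ^ k * (a + b) ^ k)
    (hD : D = (1 + b ^ (N + 1) * (a + b) ^ N + a * b * S) *
      (a * ∑ k ∈ Finset.range (N + 1), b ^ k * (a + b) ^ k - b -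
        b ^ (N + 1) * (a + b) ^ (N + 1))) :
    (1 + b ^ (N + 1) * (a + b) ^ N) ^ 2 - a ^ 2 * b ^ 2 * S ^ 2 - a * D +
        ((q : ℂ) * ((q : ℂ) - 1) * u ^ 3 / (1 - (q : ℂ) * u ^ 2)) * D =
      (1 - u ^ 2) * (1 - (q : ℂ) * u) *
        ((1 + u) * (∑ k ∈ Finset.range N, (q : ℂ) ^ k * u ^ (2 * k)) +
          (q : ℂ) ^ N * u ^ (2 * N)) *
        (1 + ((q : ℂ) - 1) * (∑ k ∈ Finset.range (N + 1), (q : ℂ) ^ k * u ^ (2 * k + 1)) -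
          (q : ℂ) ^ N * u ^ (2 * N + 1)) / (1 - (q : ℂ) * u ^ 2) := by
  set t : ℂ := (q : ℂ) * u ^ 2 with ht
  have hab : b * (a + b) = t := by rw [ha, hb, ht]; ring
  have hk : ∀ k : ℕ, b ^ k * (a + b) ^ k = t ^ k := fun k => by
    rw [← mul_pow, hab]
  have hS' : S = ∑ k ∈ Finset.range N, t ^ k := by
    rw [hS]; exact Finset.sum_congr rfl fun k _ => hk k
  have hgeom : S * (t - 1) = t ^ N - 1 := by
    rw [hS']; exact geom_sum_mul t N
  have hT : t ^ N = S * (t - 1) + 1 := by rw [hgeom]; ring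
  have hsum1 : (∑ k ∈ Finset.range N, (q : ℂ) ^ k * u ^ (2 * k)) = S := by
    rw [hS']
    exact Finset.sum_congr rfl fun k _ => by rw [ht, mul_pow, pow_mul]
  have hsum2 : (∑ k ∈ Finset.range (N + 1), (q : ℂ) ^ k * u ^ (2 * k + 1))
      = (S + t ^ N) * u := by
    have : (∑ k ∈ Finset.range (N + 1), (q : ℂ) ^ k * u ^ (2 * k + 1))
        = ∑ k ∈ Finset.range (N + 1), t ^ k * u := by
      exact Finset.sum_congr rfl fun k _ => by rw [ht, mul_pow, pow_succ, pow_mul, mul_assoc]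
    rw [this, ← Finset.sum_mul, Finset.sum_range_succ, ← hS']
  have hsum3 : (∑ k ∈ Finset.range (N + 1), b ^ k * (a + b) ^ k) = S + t ^ N := by
    rw [Finset.sum_range_succ, ← hS, hk]
  have hbN : b ^ (N + 1) * (a + b) ^ N = b * t ^ N := by
    rw [pow_succ, mul_comm (b ^ N) b, mul_assoc, hk]
  have hbN1 : b ^ (N + 1) * (a + b) ^ (N + 1) = t ^ N * t := by
    rw [hk, pow_succ]
  have hqN : (q : ℂ) ^ N * u ^ (2 * N) = t ^ N := by rw [ht, mul_pow, pow_mul]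
  have hqN1 : (q : ℂ) ^ N * u ^ (2 * N + 1) = t ^ N * u := by
    rw [ht, mul_pow, pow_succ, pow_mul, mul_assoc]
  rw [hD, hsum1, hsum2, hsum3, hbN, hbN1, hqN, hqN1, hT, ha, hb]
  field_simp
  ring
end

section
/- Let T be a bounded operator on ℓ-space of edges of the one-ray weighted graph, with matrix (relative to the natural edge basis f₁, f₂, f₃, …) given by the infinite tridiagonal-type matrix with 1 on the diagonal, entries a = -(q-1)u and b = -u on specified sub/super-diagonals, and a+b on certain entries as in the paper. Then the finite principal-minor determinants D_n of I - uT restricted to the first 2n edges satisfy the recursion whose limit is det(I - uT) = (1 - (qk - k + 1)u²)/(1 - qu²); equivalently, the sequence of determinants of the truncations converges to (1 - (qk-k+1)u²)/(1 - qu²) when |qu²| < 1. -/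
/-!
Write `a = -(q-1)u`, `b = -u`, `c = -(k-1)u` and `r = b(a+b) = qu²`. In the truncation of size
`2n+4` whose entry at `(2n+3, 2n+2)` is `β`, the last two rows and columns form the unitriangular
block `[[1, 0], [β, 1]]` and meet the rest only through `a + b` at `(2n+1, 2n+3)` and `b` at
`(2n+2, 2n)`. Its Schur complement is therefore the truncation of size `2n+2` whose entry at
`(2n+1, 2n)` is `a + rβ`. Descending to the `2 × 2` corner `[[1, c], [β, 1]]` gives
`D_{n+1} = 1 - ca(1 + r + ⋯ + rⁿ)`, and since `|r| < 1` this tends to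
`1 - ca/(1 - r) = (1 - (qk-k+1)u²)/(1 - qu²)`.
-/

/-- The `i,j` entry (0-indexed) of the infinite matrix `I - uT` for the one-ray
weighted graph with base group of order `k`: `1` on the diagonal, `-(k-1)u` at
`(0,1)`, `a = -(q-1)u` on the subdiagonal entries `(2m+1, 2m)`, `a + b` at the
entries `(2m+1, 2m+3)`, and `b = -u` at the entries `(2m+2, 2m)`. -/
noncomputable def oneRayEntry (q k : ℕ) (u : ℂ) (i j : ℕ) : ℂ :=
  if i = j then 1
  else if i = 0 ∧ j = 1 then -((k : ℂ) - 1) * u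
  else if i % 2 = 1 ∧ j + 1 = i then -((q : ℂ) - 1) * u
  else if i % 2 = 1 ∧ j = i + 2 then -((q : ℂ) - 1) * u + -u
  else if i % 2 = 0 ∧ 2 ≤ i ∧ j + 2 = i then -u
  else 0

open Matrix

noncomputable def oneRayTrunc (q k : ℕ) (u : ℂ) (n : ℕ) : Matrix (Fin n) (Fin n) ℂ :=
  of fun i j => oneRayEntry q k u i j

noncomputable def oneRayTruncWithCorner (q k : ℕ) (u β : ℂ) (n : ℕ) :
    Matrix (Fin (2 * n + 2)) (Fin (2 * n + 2)) ℂ :=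
  of fun i j => if (i : ℕ) = 2 * n + 1 ∧ (j : ℕ) = 2 * n then β else oneRayEntry q k u i j

section

variable (q k : ℕ) (u : ℂ)

lemma oneRayEntry_odd_pred (m : ℕ) :
    oneRayEntry q k u (2 * m + 1) (2 * m) = -((q : ℂ) - 1) * u := by
  unfold oneRayEntry
  split_ifs <;> first | rfl | omega

lemma oneRayTruncWithCorner_odd_pred (n : ℕ) :
    oneRayTruncWithCorner q k u (-((q : ℂ) - 1) * u) n = oneRayTrunc q k u (2 * n + 2) := by
  ext i j
  simp only [oneRayTruncWithCorner, oneRayTrunc, of_apply]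
  split_ifs with h
  · rw [h.1, h.2, oneRayEntry_odd_pred]
  · rfl

lemma submatrix_oneRayTruncWithCorner_succ (β : ℂ) (n : ℕ) :
    (oneRayTruncWithCorner q k u β (n + 1)).submatrix finSumFinEquiv finSumFinEquiv =
      fromBlocks (oneRayTrunc q k u (2 * n + 2))
        (single ⟨2 * n + 1, by omega⟩ 1 (-((q : ℂ) - 1) * u + -u))
        (single 0 ⟨2 * n, by omega⟩ (-u)) !![1, 0; β, 1] := by
  ext (i | i) (j | j)
  · simp only [submatrix_apply, finSumFinEquiv_apply_left, fromBlocks_apply₁₁,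
      oneRayTruncWithCorner, oneRayTrunc, of_apply, Fin.val_castAdd]
    rw [if_neg (by omega)]
  all_goals
    simp only [submatrix_apply, finSumFinEquiv_apply_left, finSumFinEquiv_apply_right,
      fromBlocks_apply₁₂, fromBlocks_apply₂₁, fromBlocks_apply₂₂, oneRayTruncWithCorner,
      of_apply, single_apply, Fin.ext_iff, Fin.val_castAdd, Fin.val_natAdd, Fin.val_zero, Fin.val_one]
  · unfold oneRayEntry; split_ifs <;> first | rfl | omega
  · unfold oneRayEntry; split_ifs <;> first | rfl | omega
  · fin_cases i <;> fin_cases j <;> simp [oneRayEntry, add_assoc]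

lemma oneRayTrunc_sub_single_mul_mul_single (β : ℂ) (n : ℕ) :
    oneRayTrunc q k u (2 * n + 2) -
        single (⟨2 * n + 1, by omega⟩ : Fin (2 * n + 2)) (1 : Fin 2)
            (-((q : ℂ) - 1) * u + -u) * !![1, 0; -β, 1] *
          single (0 : Fin 2) (⟨2 * n, by omega⟩ : Fin (2 * n + 2)) (-u) =
      oneRayTruncWithCorner q k u (-((q : ℂ) - 1) * u + q * u ^ 2 * β) n := by
  rw [single_mul_mul_single]
  ext i j
  simp only [Matrix.sub_apply, single_apply, oneRayTrunc, oneRayTruncWithCorner, of_apply,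
    Fin.ext_iff]
  split_ifs with h
  · rw [← h.1, ← h.2, oneRayEntry_odd_pred]
    simp only [cons_val', cons_val_zero, cons_val_one, cons_val_fin_one]
    ring
  · omega
  · omega
  · simp

lemma det_oneRayTruncWithCorner_succ (β : ℂ) (n : ℕ) :
    (oneRayTruncWithCorner q k u β (n + 1)).det =
      (oneRayTruncWithCorner q k u (-((q : ℂ) - 1) * u + q * u ^ 2 * β) n).det := by
  have hinv : !![(1 : ℂ), 0; β, 1] * !![1, 0; -β, 1] = 1 := by simp [one_fin_two]
  let _ : Invertible !![(1 : ℂ), 0; β, 1] :=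
    ⟨!![1, 0; -β, 1], by simp [one_fin_two], hinv⟩
  rw [← det_submatrix_equiv_self finSumFinEquiv, submatrix_oneRayTruncWithCorner_succ,
    det_fromBlocks₂₂, invOf_eq_right_inv hinv, oneRayTrunc_sub_single_mul_mul_single,
    det_fin_two_of]
  ring

lemma det_oneRayTruncWithCorner (n : ℕ) (β : ℂ) :
    (oneRayTruncWithCorner q k u β n).det =
      1 - -((k : ℂ) - 1) * u *
        (-((q : ℂ) - 1) * u * ∑ j ∈ Finset.range n, ((q : ℂ) * u ^ 2) ^ j +
          ((q : ℂ) * u ^ 2) ^ n * β) := by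
  induction n generalizing β with
  | zero =>
    rw [det_fin_two]
    simp [oneRayTruncWithCorner, oneRayEntry]
  | succ n ih =>
    rw [det_oneRayTruncWithCorner_succ, ih, Finset.sum_range_succ]
    ring

lemma det_oneRayTrunc_two_mul (n : ℕ) :
    (oneRayTrunc q k u (2 * n)).det =
      1 - -((k : ℂ) - 1) * u * -((q : ℂ) - 1) * u *
        ∑ j ∈ Finset.range n, ((q : ℂ) * u ^ 2) ^ j := by
  cases n with
  | zero => simp [det_isEmpty]
  | succ n =>
    rw [mul_add_one, ← oneRayTruncWithCorner_odd_pred, det_oneRayTruncWithCorner,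
      Finset.sum_range_succ]
    ring

end

lemma norm_natCast_mul_sq_lt_one {q : ℕ} {u : ℂ} (hu : ‖u‖ < 1 / Real.sqrt q) :
    ‖(q : ℂ) * u ^ 2‖ < 1 := by
  rcases q.eq_zero_or_pos with rfl | hq
  · simp
  have hsqrt : ‖u‖ * Real.sqrt q < 1 := (lt_div_iff₀ (by positivity)).1 hu
  calc ‖(q : ℂ) * u ^ 2‖ = (‖u‖ * Real.sqrt q) ^ 2 := by
        rw [norm_mul, norm_pow, Complex.norm_natCast, mul_pow, Real.sq_sqrt q.cast_nonneg, mul_comm]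
    _ < 1 := pow_lt_one₀ (by positivity) hsqrt two_ne_zero

theorem truncated_det_limit_general (q k : ℕ) (u : ℂ)
    (hu : ‖u‖ < 1 / Real.sqrt q) :
    Filter.Tendsto
      (fun n : ℕ =>
        Matrix.det (Matrix.of fun i j : Fin (2 * n) => oneRayEntry q k u i j))
      Filter.atTop
      (nhds ((1 - ((q : ℂ) * k - k + 1) * u ^ 2) / (1 - (q : ℂ) * u ^ 2))) := by
  have hr := norm_natCast_mul_sq_lt_one hu
  have hr_ne : 1 - (q : ℂ) * u ^ 2 ≠ 0 :=
    sub_ne_zero.2 (ne_of_apply_ne norm (by simpa using hr.ne'))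
  have hlim : (1 - ((q : ℂ) * k - k + 1) * u ^ 2) / (1 - (q : ℂ) * u ^ 2) =
      1 - -((k : ℂ) - 1) * u * -((q : ℂ) - 1) * u * (1 - (q : ℂ) * u ^ 2)⁻¹ := by
    field_simp
    ring
  rw [hlim]
  change Filter.Tendsto (fun n => (oneRayTrunc q k u (2 * n)).det) _ _
  simp_rw [det_oneRayTrunc_two_mul]
  exact ((hasSum_geometric_of_norm_lt_one hr).tendsto_sum_nat.const_mul _).const_sub 1

/-- The determinants of the `2n × 2n` upper-left truncations of `I - uT`
converge to `(1 - (qk - k + 1)u²)/(1 - qu²)` when `|u| < 1/√q`. -/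
theorem truncated_det_limit (q k : ℕ) (hq : 2 ≤ q) (hk : 1 ≤ k) (u : ℂ)
    (hu : ‖u‖ < 1 / Real.sqrt q) :
    Filter.Tendsto
      (fun n : ℕ =>
        Matrix.det (Matrix.of fun i j : Fin (2 * n) => oneRayEntry q k u i j))
      Filter.atTop
      (nhds ((1 - ((q : ℂ) * k - k + 1) * u ^ 2) / (1 - (q : ℂ) * u ^ 2))) :=
  truncated_det_limit_general q k u hu
end
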